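/- arXiv:1106.1791 — 3 statements merged into one kernel-verified Lean document; each statement's English description precedes it below -/
import Mathlib

section
/- For any constant c ≥ 0, the map F defined on measure-preserving functions f : (X,p) → (Y,q) between finite probability spaces by F(f) = c(H(p) − H(q)) takes values in [0,∞) and satisfies: (1) Functoriality: F(f ∘ g) = F(f) + F(g) for composable measure-preserving functions; (2) Convex linearity: F(λf ⊕ (1−λ)g) = λF(f) + (1−λ)F(g) for all λ ∈ [0,1]; (3) Continuity: F(f_n) → F(f) whenever f_n converges to f. -/
open scoped BigOperators Classical
open Filter Topology Real

/-- `p` is a probability measure on the finite set `X`. -/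
def IsProb {X : Type} [Fintype X] (p : X → ℝ) : Prop :=
  (∀ i, 0 ≤ p i) ∧ ∑ i, p i = 1

/-- `p` is a (nonnegative) measure on the finite set `X`. -/
def IsMeas {X : Type} [Fintype X] (p : X → ℝ) : Prop :=
  ∀ i, 0 ≤ p i

/-- `f` is a measure-preserving function from `(X, p)` to `(Y, q)`. -/
def IsMP {X Y : Type} [Fintype X] [Fintype Y] (p : X → ℝ) (q : Y → ℝ) (f : X → Y) : Prop :=
  ∀ j : Y, q j = ∑ i, if f i = j then p i else 0

/-- Shannon entropy (with the convention `0 * log 0 = 0`, automatic since `Real.log 0 = 0`). -/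
noncomputable def shannon {X : Type} [Fintype X] (p : X → ℝ) : ℝ :=
  -∑ i, p i * Real.log (p i)

/-- The convex combination `λ p ⊕ (1 - λ) q` on the disjoint union. -/
noncomputable def cvx (lam : ℝ) {X Y : Type} (p : X → ℝ) (q : Y → ℝ) : X ⊕ Y → ℝ :=
  Sum.elim (fun i => lam * p i) (fun j => (1 - lam) * q j)

/-- The direct sum `p ⊕ q` on the disjoint union. -/
def dsum {X Y : Type} (p : X → ℝ) (q : Y → ℝ) : X ⊕ Y → ℝ :=
  Sum.elim p q

/-- Extended Shannon entropy of a measure on a finite set. -/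
noncomputable def shannonExt {X : Type} [Fintype X] (p : X → ℝ) : ℝ :=
  if (∑ i, p i) = 0 then 0 else (∑ i, p i) * shannon (fun i => p i / ∑ j, p j)

/-- Tsallis entropy of order `α` of a probability measure. -/
noncomputable def tsallis (α : ℝ) {X : Type} [Fintype X] (p : X → ℝ) : ℝ :=
  if α = 1 then shannon p else (1 / (α - 1)) * (1 - ∑ i, p i ^ α)

/-- Extended Tsallis entropy of order `α` of a measure on a finite set. -/
noncomputable def tsallisExt (α : ℝ) {X : Type} [Fintype X] (p : X → ℝ) : ℝ :=
  if (∑ i, p i) = 0 then 0 else (∑ i, p i) ^ α * tsallis α (fun i => p i / ∑ j, p j)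

/-! Pushing `p` forward along `f` can only merge atoms, and since `x ↦ log x` is increasing the
merged atoms carry larger `log`-weights: `H(q) = -∑ pᵢ log q_{f i} ≤ -∑ pᵢ log pᵢ = H(p)`.
Convex linearity reduces to `-(λx) log(λx) = λ(-x log x) + x(-λ log λ)`, which gives
`H(λp ⊕ (1-λ)q) = λH(p) + (1-λ)H(q) + h(λ)` with `h` the binary entropy; the `h(λ)` cancels
in the difference. Continuity is that of `x ↦ -x log x`. -/

lemma shannon_eq_sum_negMulLog {X : Type} [Fintype X] (p : X → ℝ) :
    shannon p = ∑ i, Real.negMulLog (p i) := by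
  simp [shannon, Real.negMulLog, Finset.sum_neg_distrib]

lemma continuous_shannon {X : Type} [Fintype X] : Continuous (shannon : (X → ℝ) → ℝ) := by
  simp_rw [funext shannon_eq_sum_negMulLog]
  exact continuous_finsetSum _ fun i _ => Real.continuous_negMulLog.comp (continuous_apply i)

namespace IsMP

variable {X Y : Type} [Fintype X] [Fintype Y] {p : X → ℝ} {q : Y → ℝ} {f : X → Y}

lemma sum_mul_comp (hf : IsMP p q f) (g : Y → ℝ) : ∑ j, q j * g j = ∑ i, p i * g (f i) := by
  simp only [hf _, Finset.sum_mul, ite_mul, zero_mul]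
  rw [Finset.sum_comm]
  simp

lemma le_apply (hp : IsMeas p) (hf : IsMP p q f) (i : X) : p i ≤ q (f i) := by
  rw [hf (f i)]
  simpa using Finset.single_le_sum (f := fun i' => if f i' = f i then p i' else 0)
    (fun i' _ => by split_ifs <;> simp [hp i']) (Finset.mem_univ i)

lemma shannon_le (hp : IsMeas p) (hf : IsMP p q f) : shannon q ≤ shannon p := by
  rw [shannon, shannon, neg_le_neg_iff, hf.sum_mul_comp (fun j => Real.log (q j))]
  refine Finset.sum_le_sum fun i _ => ?_
  rcases (hp i).eq_or_lt with h | h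
  · simp [← h]
  · exact mul_le_mul_of_nonneg_left (Real.log_le_log h (hf.le_apply hp i)) (hp i)

end IsMP

lemma shannon_cvx {X Y : Type} [Fintype X] [Fintype Y] (lam : ℝ) {p : X → ℝ} {q : Y → ℝ}
    (hp : ∑ i, p i = 1) (hq : ∑ j, q j = 1) :
    shannon (cvx lam p q) = lam * shannon p + (1 - lam) * shannon q + Real.binEntropy lam := by
  simp only [shannon_eq_sum_negMulLog, cvx, Fintype.sum_sum_type, Sum.elim_inl, Sum.elim_inr,
    Real.negMulLog_mul, Finset.sum_add_distrib, ← Finset.sum_mul, ← Finset.mul_sum, hp, hq,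
    Real.binEntropy_eq_negMulLog_add_negMulLog_one_sub]
  ring

/-- The map `f ↦ c (H(p) - H(q))` is nonnegative, functorial, convex linear and continuous. -/
theorem stmt1 (c : ℝ) (hc : 0 ≤ c) :
    -- takes values in [0, ∞)
    (∀ {X Y : Type} [Fintype X] [Fintype Y] (p : X → ℝ) (q : Y → ℝ) (f : X → Y),
      IsProb p → IsProb q → IsMP p q f → 0 ≤ c * (shannon p - shannon q)) ∧
    -- functoriality
    (∀ {X Y Z : Type} [Fintype X] [Fintype Y] [Fintype Z]
      (p : X → ℝ) (q : Y → ℝ) (r : Z → ℝ) (g : X → Y) (f : Y → Z),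
      IsProb p → IsProb q → IsProb r → IsMP p q g → IsMP q r f →
      c * (shannon p - shannon r)
        = c * (shannon q - shannon r) + c * (shannon p - shannon q)) ∧
    -- convex linearity
    (∀ {X X' Y Y' : Type} [Fintype X] [Fintype X'] [Fintype Y] [Fintype Y']
      (p : X → ℝ) (p' : X' → ℝ) (q : Y → ℝ) (q' : Y' → ℝ) (f : X → X') (g : Y → Y')
      (lam : ℝ), 0 ≤ lam → lam ≤ 1 →
      IsProb p → IsProb p' → IsProb q → IsProb q' → IsMP p p' f → IsMP q q' g →
      c * (shannon (cvx lam p q) - shannon (cvx lam p' q'))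
        = lam * (c * (shannon p - shannon p')) + (1 - lam) * (c * (shannon q - shannon q'))) ∧
    -- continuity
    (∀ {X Y : Type} [Fintype X] [Fintype Y]
      (pn : ℕ → X → ℝ) (qn : ℕ → Y → ℝ) (fn : ℕ → X → Y)
      (p : X → ℝ) (q : Y → ℝ) (f : X → Y),
      (∀ n, IsProb (pn n)) → (∀ n, IsProb (qn n)) → (∀ n, IsMP (pn n) (qn n) (fn n)) →
      IsProb p → IsProb q → IsMP p q f →
      (∀ᶠ n in atTop, fn n = f) →
      (∀ i, Tendsto (fun n => pn n i) atTop (𝓝 (p i))) →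
      (∀ j, Tendsto (fun n => qn n j) atTop (𝓝 (q j))) →
      Tendsto (fun n => c * (shannon (pn n) - shannon (qn n))) atTop
        (𝓝 (c * (shannon p - shannon q)))) := by
  refine ⟨?_, ?_, ?_, ?_⟩
  · intro X Y _ _ p q f hp _ hf
    exact mul_nonneg hc (sub_nonneg.mpr (hf.shannon_le hp.1))
  · intros
    ring
  · intro X X' Y Y' _ _ _ _ p p' q q' f g lam _ _ hp hp' hq hq' _ _
    rw [shannon_cvx lam hp.2 hq.2, shannon_cvx lam hp'.2 hq'.2]
    ring
  · intro X Y _ _ pn qn fn p q f _ _ _ _ _ _ _ hpn hqn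
    have hp := (continuous_shannon.tendsto p).comp (tendsto_pi_nhds.2 hpn)
    have hq := (continuous_shannon.tendsto q).comp (tendsto_pi_nhds.2 hqn)
    exact (hp.sub hq).const_mul c
end

section
/- Let F be a map assigning to every measure-preserving function f : (X,p) → (Y,q) between finite measure spaces a number F(f) ∈ [0,∞). Suppose F satisfies: (1) Functoriality: F(f ∘ g) = F(f) + F(g) whenever f and g are composable; (2) Additivity: F(f ⊕ g) = F(f) + F(g) for all measure-preserving functions f, g; (3) Homogeneity: F(λf) = λF(f) for all measure-preserving functions f and all λ ∈ [0,∞); (4) Continuity: F(f_n) → F(f) whenever f_n converges to f. Then there exists a constant c ≥ 0 such that F(f) = c(H(p) − H(q)) for every measure-preserving function f : (X,p) → (Y,q), where H denotes the extended Shannon entropy. -/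
/-!
Collapsing a measure `p` to a point defines `G p := F (p → pt)`, and functoriality gives
`F f = G p - G q`. Additivity splits `G (p ⊕ q)` as `G p + G q + u (‖p‖, ‖q‖)`, where `u a b` is
the loss of merging two points of masses `a` and `b`; `u` is symmetric, homogeneous, continuous
and satisfies the cocycle identity `u (a + b) c + u a b = u a (b + c) + u b c`.

On integers the cocycle identity makes `u` the coboundary of `A n = ∑ k < n, u 1 k`, and
homogeneity gives `A (m n) = m A n + n A m`, so `A n / n` is completely additive. Continuity of `u`
at `(1, 0)` makes the increments of `A n / n` tend to `0`, so by a theorem of Erdős `A n / n` is a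
multiple of `log n`. Hence `u` is a multiple of the binary entropy on integer points, by
homogeneity on rational points and by continuity everywhere; induction on the number of points
then gives `G = c H`.
-/

open scoped BigOperators Classical
open Filter Topology Real

open Finset

lemma abs_le_sum_add_mul_log_of_map_two_mul {β : ℕ → ℝ} (hβ1 : β 1 = 0)
    (hβ2 : ∀ n, 1 ≤ n → β (2 * n) = β n) {d : ℕ → ℝ} (hd : ∀ n, 0 ≤ d n) {ε : ℝ} (hε : 0 ≤ ε)
    (hΔ : ∀ n, |β (n + 1) - β n| ≤ d n + ε) :
    ∀ N, 1 ≤ N → |β N| ≤ ∑ n ∈ range N, d n + ε * Nat.log 2 N := by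
  intro N
  induction N using Nat.strong_induction_on with
  | _ N ih =>
  intro hN
  obtain rfl | hN2 : N = 1 ∨ 2 ≤ N := by omega
  · simpa [hβ1] using hd 0
  have ih_half := ih (N / 2) (by omega) (by omega)
  have step : |β N| ≤ |β (N / 2)| + (d (N - 1) + ε) := by
    obtain ⟨q, rfl | rfl⟩ := Nat.even_or_odd' N
    · rw [Nat.mul_div_cancel_left q two_pos, hβ2 q (by omega)]
      linarith [hd (2 * q - 1)]
    · have hq : (2 * q + 1) / 2 = q := by omega
      have := hΔ (2 * q)
      rw [hq, Nat.add_sub_cancel, ← hβ2 q (by omega)]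
      linarith [abs_sub_abs_le_abs_sub (β (2 * q + 1)) (β (2 * q))]
  have hsum : ∑ n ∈ range (N / 2), d n + d (N - 1) ≤ ∑ n ∈ range N, d n := by
    obtain ⟨M, rfl⟩ : ∃ M, N = M + 1 := ⟨N - 1, by omega⟩
    rw [sum_range_succ, Nat.add_sub_cancel]
    have := sum_le_sum_of_subset_of_nonneg (range_subset_range.2 (show (M + 1) / 2 ≤ M by omega))
      fun n _ _ => hd n
    linarith
  have hlog : Nat.log 2 N = Nat.log 2 (N / 2) + 1 := by
    rw [Nat.log_div_base]; have := Nat.log_pos one_lt_two hN2; omega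
  rw [hlog]
  push_cast
  linarith

lemma exists_abs_le_add_mul_log_of_map_two_mul {β : ℕ → ℝ} (hβ1 : β 1 = 0)
    (hβ2 : ∀ n, 1 ≤ n → β (2 * n) = β n)
    (hΔ : Tendsto (fun n => β (n + 1) - β n) atTop (𝓝 0)) {ε : ℝ} (hε : 0 < ε) :
    ∃ B, ∀ N, 1 ≤ N → |β N| ≤ B + ε * Nat.log 2 N := by
  obtain ⟨T, hT⟩ := eventually_atTop.1 (hΔ.eventually (Metric.closedBall_mem_nhds (0 : ℝ) hε))
  refine ⟨∑ n ∈ range T, |β (n + 1) - β n|, fun N hN => ?_⟩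
  have key := abs_le_sum_add_mul_log_of_map_two_mul hβ1 hβ2
    (d := fun n => if n < T then |β (n + 1) - β n| else 0)
    (fun n => by positivity) hε.le (fun n => ?_) N hN
  · have hB : ∑ n ∈ range N, (if n < T then |β (n + 1) - β n| else 0)
        ≤ ∑ n ∈ range T, |β (n + 1) - β n| := by
      rw [← sum_filter]
      exact sum_le_sum_of_subset_of_nonneg (fun n hn => by simp_all) fun n _ _ => abs_nonneg _
    linarith
  · split_ifs with hn
    · linarith
    · simpa [Real.dist_eq] using hT n (not_lt.1 hn)

theorem eq_zero_of_map_mul_of_tendsto_sub {f : ℕ → ℝ}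
    (hmul : ∀ m n, 1 ≤ m → 1 ≤ n → f (m * n) = f m + f n) (hf2 : f 2 = 0)
    (hΔ : Tendsto (fun n => f (n + 1) - f n) atTop (𝓝 0)) {m : ℕ} (hm : 1 ≤ m) : f m = 0 := by
  have hf1 : f 1 = 0 := by have := hmul 1 1 le_rfl le_rfl; norm_num at this; linarith
  have hf2n (n : ℕ) (hn : 1 ≤ n) : f (2 * n) = f n := by
    rw [hmul 2 n one_le_two hn, hf2, zero_add]
  have hpow : ∀ k : ℕ, f (m ^ k) = k * f m := by
    intro k
    induction k with
    | zero => simpa using hf1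
    | succ k ih => rw [pow_succ, hmul _ _ (Nat.one_le_pow _ _ hm) hm, ih]; push_cast; ring
  have hlog : ∀ k : ℕ, (Nat.log 2 (m ^ k) : ℝ) ≤ k * (Nat.log 2 m + 1) := by
    intro k
    have : Nat.log 2 (m ^ k) ≤ Nat.log 2 (2 ^ ((Nat.log 2 m + 1) * k)) := by
      refine Nat.log_mono_right ?_
      rw [pow_mul]
      exact Nat.pow_le_pow_left (Nat.lt_pow_succ_log_self one_lt_two m).le k
    rw [Nat.log_pow one_lt_two] at this
    exact_mod_cast this.trans_eq (mul_comm _ _)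
  -- `|f (m ^ k)| = k |f m|` grows linearly in `k`, the bound on it only like `ε k log m`.
  refine abs_eq_zero.1 (le_antisymm (le_of_forall_pos_le_add fun ε hε => ?_) (abs_nonneg _))
  set L : ℝ := Nat.log 2 m + 2 with hL
  have hL0 : 0 < L := by positivity
  obtain ⟨B, hB⟩ :=
    exists_abs_le_add_mul_log_of_map_two_mul hf1 hf2n hΔ (ε := ε / L) (by positivity)
  obtain ⟨k, hk⟩ := exists_nat_gt (B / (ε / L))
  have hBk : B < k * (ε / L) := by rwa [div_lt_iff₀ (by positivity)] at hk
  have hk0 : (0 : ℝ) < k := by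
    have := (abs_nonneg _).trans (hB 1 le_rfl)
    simp only [Nat.log_one_right, CharP.cast_eq_zero, mul_zero, add_zero] at this
    exact lt_of_le_of_lt (div_nonneg this (by positivity)) hk
  have hmk := hB (m ^ k) (Nat.one_le_pow _ _ hm)
  rw [hpow, abs_mul, Nat.abs_cast] at hmk
  have : (k : ℝ) * |f m| ≤ k * ε :=
    calc (k : ℝ) * |f m| ≤ B + ε / L * (k * (Nat.log 2 m + 1)) :=
          hmk.trans (by gcongr; exact hlog k)
      _ ≤ k * (ε / L) + ε / L * (k * (Nat.log 2 m + 1)) := by linarith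
      _ = k * ε := by rw [hL]; field_simp; ring
  simpa using le_of_mul_le_mul_left this hk0

theorem eq_mul_log_of_map_mul_of_tendsto_sub {f : ℕ → ℝ}
    (hmul : ∀ m n, 1 ≤ m → 1 ≤ n → f (m * n) = f m + f n)
    (hΔ : Tendsto (fun n => f (n + 1) - f n) atTop (𝓝 0)) {m : ℕ} (hm : 1 ≤ m) :
    f m = f 2 / log 2 * log m := by
  have hlog2 : log 2 ≠ 0 := (log_pos one_lt_two).ne'
  have := eq_zero_of_map_mul_of_tendsto_sub (f := fun n => f n - f 2 / log 2 * log n)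
    (fun a b ha hb => by
      push_cast
      rw [hmul a b ha hb, log_mul (by positivity) (by positivity)]
      ring)
    (by push_cast; field_simp; ring)
    (by
      have := hΔ.sub (tendsto_log_nat_add_one_sub_log.const_mul (f 2 / log 2))
      rw [mul_zero, sub_zero] at this
      exact this.congr fun n => by push_cast; ring)
    hm
  linarith

structure IsInfoCocycle (u : ℝ → ℝ → ℝ) : Prop where
  symm : ∀ a b, 0 ≤ a → 0 ≤ b → u a b = u b a
  smul : ∀ t a b, 0 ≤ t → 0 ≤ a → 0 ≤ b → u (t * a) (t * b) = t * u a b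
  cocycle : ∀ a b c, 0 ≤ a → 0 ≤ b → 0 ≤ c → u (a + b) c + u a b = u a (b + c) + u b c
  tendsto : ∀ (a b : ℕ → ℝ) (a₀ b₀ : ℝ), (∀ n, 0 ≤ a n) → (∀ n, 0 ≤ b n) →
    Tendsto a atTop (𝓝 a₀) → Tendsto b atTop (𝓝 b₀) →
    Tendsto (fun n => u (a n) (b n)) atTop (𝓝 (u a₀ b₀))

noncomputable def pairEntropy (a b : ℝ) : ℝ := negMulLog a + negMulLog b - negMulLog (a + b)

lemma pairEntropy_smul (t a b : ℝ) : pairEntropy (t * a) (t * b) = t * pairEntropy a b := by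
  simp only [pairEntropy, ← mul_add, negMulLog_mul]
  ring

lemma continuous_pairEntropy : Continuous fun x : ℝ × ℝ => pairEntropy x.1 x.2 := by
  unfold pairEntropy
  fun_prop

def cocyclePotential (u : ℝ → ℝ → ℝ) (n : ℕ) : ℝ := ∑ k ∈ range n, u 1 k

lemma cocyclePotential_succ (u : ℝ → ℝ → ℝ) (n : ℕ) :
    cocyclePotential u (n + 1) = cocyclePotential u n + u 1 n :=
  sum_range_succ _ _

namespace IsInfoCocycle

variable {u : ℝ → ℝ → ℝ} (hu : IsInfoCocycle u)
include hu

lemma apply_zero_right {a : ℝ} (ha : 0 ≤ a) : u a 0 = 0 := by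
  have h00 : u 0 0 = 0 := by simpa using hu.smul 0 0 0 le_rfl le_rfl le_rfl
  have := hu.cocycle a 0 0 ha le_rfl le_rfl
  simp only [add_zero] at this
  linarith

lemma natCast_eq_cocyclePotential (k l : ℕ) :
    u k l = cocyclePotential u (k + l) - cocyclePotential u k - cocyclePotential u l := by
  induction k generalizing l with
  | zero =>
    simp [hu.symm 0 l le_rfl l.cast_nonneg, hu.apply_zero_right l.cast_nonneg, cocyclePotential]
  | succ k ih =>
    have hco := hu.cocycle k 1 l k.cast_nonneg zero_le_one l.cast_nonneg
    have hk1 : u k 1 = u 1 k := by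
      simpa [cocyclePotential, sum_range_succ, hu.apply_zero_right zero_le_one] using ih 1
    have hkl := ih (l + 1)
    rw [show k + (l + 1) = k + 1 + l by omega, cocyclePotential_succ] at hkl
    rw [cocyclePotential_succ u k]
    push_cast at hco hkl ⊢
    rw [add_comm 1 (l : ℝ)] at hco
    linarith

lemma cocyclePotential_mul (m n : ℕ) :
    cocyclePotential u (m * n) = m * cocyclePotential u n + n * cocyclePotential u m := by
  induction n with
  | zero => simp [cocyclePotential]
  | succ n ih =>
    have h := hu.natCast_eq_cocyclePotential (m * n) m
    have hsmul : u ((m * n : ℕ) : ℝ) m = m * u 1 n := by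
      rw [hu.symm 1 n zero_le_one n.cast_nonneg, ← hu.smul m n 1 m.cast_nonneg n.cast_nonneg
        zero_le_one]
      push_cast
      ring_nf
    rw [mul_add_one, cocyclePotential_succ]
    push_cast
    linarith

lemma tendsto_apply_one_div : Tendsto (fun n : ℕ => u 1 n / (n + 1)) atTop (𝓝 0) := by
  have h := hu.tendsto (fun n : ℕ => ((n : ℝ) + 1)⁻¹ * 1) (fun n => ((n : ℝ) + 1)⁻¹ * n) 0 1
    (fun n => by positivity) (fun n => by positivity)
    (by simpa using tendsto_one_div_add_atTop_nhds_zero_nat (𝕜 := ℝ))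
    (by simpa [div_eq_inv_mul] using tendsto_natCast_div_add_atTop (1 : ℝ))
  rw [hu.symm 0 1 le_rfl zero_le_one, hu.apply_zero_right zero_le_one] at h
  refine h.congr fun n => ?_
  rw [hu.smul _ _ _ (by positivity) zero_le_one n.cast_nonneg, div_eq_inv_mul]

lemma tendsto_cocyclePotential_div :
    Tendsto (fun n : ℕ => cocyclePotential u n / (n * (n + 1))) atTop (𝓝 0) := by
  -- Cesàro: the term is bounded by `n⁻¹ ∑ k < n, |u 1 k / (k + 1)|`.
  refine squeeze_zero_norm (fun n => ?_) (by simpa using hu.tendsto_apply_one_div.abs.cesaro)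
  rw [Real.norm_eq_abs, cocyclePotential, div_mul_eq_div_div_swap, sum_div, div_eq_inv_mul,
    abs_mul, abs_inv, Nat.abs_cast]
  gcongr
  refine (abs_sum_le_sum_abs _ _).trans (sum_le_sum fun k hk => ?_)
  rw [abs_div, abs_div]
  gcongr
  exact (mem_range.1 hk).le

lemma cocyclePotential_eq (n : ℕ) :
    cocyclePotential u n = u 1 1 / (2 * log 2) * (n * log n) := by
  rcases Nat.eq_zero_or_pos n with rfl | hn
  · simp [cocyclePotential]
  have hA2 : cocyclePotential u 2 = u 1 1 := by
    simp [cocyclePotential, sum_range_succ, hu.apply_zero_right zero_le_one]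
  have hdiff : Tendsto (fun n : ℕ => cocyclePotential u (n + 1) / (n + 1 : ℕ)
      - cocyclePotential u n / n) atTop (𝓝 0) := by
    have := hu.tendsto_apply_one_div.sub hu.tendsto_cocyclePotential_div
    rw [sub_zero] at this
    refine this.congr' (eventually_atTop.2 ⟨1, fun n hn => ?_⟩)
    have : (n : ℝ) ≠ 0 := by positivity
    simp only [cocyclePotential_succ]
    push_cast
    field_simp
    ring
  have h := eq_mul_log_of_map_mul_of_tendsto_sub (f := fun n => cocyclePotential u n / n)
    (fun a b ha hb => by
      have : (a : ℝ) ≠ 0 := by positivity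
      have : (b : ℝ) ≠ 0 := by positivity
      push_cast
      rw [hu.cocyclePotential_mul]
      field_simp
      ring)
    hdiff hn
  have : (n : ℝ) ≠ 0 := by positivity
  simp only [hA2, Nat.cast_ofNat] at h
  field_simp at h ⊢
  linarith

lemma natCast_eq_mul_pairEntropy (k l : ℕ) :
    u k l = u 1 1 / (2 * log 2) * pairEntropy k l := by
  rw [hu.natCast_eq_cocyclePotential, hu.cocyclePotential_eq, hu.cocyclePotential_eq,
    hu.cocyclePotential_eq]
  simp only [pairEntropy, negMulLog]
  push_cast
  ring

theorem eq_mul_pairEntropy {a b : ℝ} (ha : 0 ≤ a) (hb : 0 ≤ b) :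
    u a b = u 1 1 / (2 * log 2) * pairEntropy a b := by
  -- Approximate `(a, b)` by `n⁻¹ (⌊a n⌋, ⌊b n⌋)`, where homogeneity reduces to integer points.
  have hlim {x : ℝ} (hx : 0 ≤ x) :
      Tendsto (fun n : ℕ => (n : ℝ)⁻¹ * ⌊x * n⌋₊) atTop (𝓝 x) := by
    simpa [Function.comp_def, div_eq_inv_mul] using
      (tendsto_nat_floor_mul_div_atTop hx).comp tendsto_natCast_atTop_atTop
  have hu_lim := hu.tendsto _ _ a b (fun n => by positivity) (fun n => by positivity)
    (hlim ha) (hlim hb)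
  have hent_lim := ((continuous_pairEntropy.tendsto (a, b)).comp
    ((hlim ha).prodMk_nhds (hlim hb))).const_mul (u 1 1 / (2 * log 2))
  refine tendsto_nhds_unique (hu_lim.congr fun n => ?_) hent_lim
  rw [hu.smul _ _ _ (by positivity) (by positivity) (by positivity),
    hu.natCast_eq_mul_pairEntropy, Function.comp_apply, pairEntropy_smul]
  ring

end IsInfoCocycle

section MeasurePreserving

variable {X Y : Type} [Fintype X] [Fintype Y] {p : X → ℝ} {q : Y → ℝ} {f : X → Y}

lemma IsMP.sum_eq (hf : IsMP p q f) : ∑ j, q j = ∑ i, p i := by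
  rw [sum_congr rfl fun j _ => hf j, sum_comm]
  simp

lemma IsMP.isMeas (hp : IsMeas p) (hf : IsMP p q f) : IsMeas q := fun j => by
  rw [hf j]
  exact sum_nonneg fun i _ => by split_ifs <;> simp [hp i]

lemma IsMeas.dsum (hp : IsMeas p) (hq : IsMeas q) : IsMeas (dsum p q) := by
  rintro (i | j)
  exacts [hp i, hq j]

lemma isMeas_pair {a b : ℝ} (ha : 0 ≤ a) (hb : 0 ≤ b) :
    IsMeas (dsum (fun _ : PUnit => a) fun _ : PUnit => b) :=
  IsMeas.dsum (fun _ => ha) fun _ => hb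

lemma isMP_id (p : X → ℝ) : IsMP p p id := fun j => by simp

lemma isMP_toPUnit (p : X → ℝ) : IsMP p (fun _ : PUnit => ∑ i, p i) fun _ => PUnit.unit :=
  fun _ => by simp

lemma isMP_comp_equiv (p : Y → ℝ) (e : X ≃ Y) : IsMP (p ∘ e) p e := fun j => by
  simp [← e.eq_symm_apply]

lemma IsMP.sumMap {X' Y' : Type} [Fintype X'] [Fintype Y'] {p' : X' → ℝ} {q' : Y' → ℝ}
    {g : X' → Y'} (hf : IsMP p q f) (hg : IsMP p' q' g) :
    IsMP (dsum p p') (dsum q q') (Sum.map f g) := by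
  rintro (j | j)
  · simp [dsum, hf j]
  · simp [dsum, hg j]

end MeasurePreserving

section MassEntropy

variable {X Y : Type} [Fintype X] [Fintype Y]

noncomputable def massEntropy (p : X → ℝ) : ℝ :=
  ∑ i, negMulLog (p i) - negMulLog (∑ i, p i)

lemma shannonExt_eq_massEntropy {p : X → ℝ} (hp : IsMeas p) : shannonExt p = massEntropy p := by
  unfold shannonExt shannon massEntropy
  set s := ∑ i, p i
  split_ifs with hs
  · have hp0 := (sum_eq_zero_iff_of_nonneg fun i _ => hp i).1 hs
    simp [hs, hp0]
  · have : -∑ i, p i / s * log (p i / s) = ∑ i, negMulLog (p i * s⁻¹) := by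
      simp [negMulLog, div_eq_mul_inv]
    rw [this]
    simp only [negMulLog_mul, sum_add_distrib, ← mul_sum, ← sum_mul]
    simp only [negMulLog, log_inv]
    field_simp
    ring

lemma massEntropy_comp_equiv (p : Y → ℝ) (e : X ≃ Y) : massEntropy (p ∘ e) = massEntropy p := by
  simp only [massEntropy, Function.comp_apply, e.sum_comp (fun j => negMulLog (p j)), e.sum_comp p]

lemma massEntropy_dsum (p : X → ℝ) (q : Y → ℝ) :
    massEntropy (dsum p q) = pairEntropy (∑ i, p i) (∑ j, q j) + massEntropy p + massEntropy q := by
  simp only [massEntropy, pairEntropy, dsum, Fintype.sum_sum_type, Sum.elim_inl, Sum.elim_inr]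
  ring

lemma massEntropy_const (a : ℝ) : massEntropy (fun _ : PUnit => a) = 0 := by
  simp [massEntropy]

lemma massEntropy_of_isEmpty [IsEmpty X] (p : X → ℝ) : massEntropy p = 0 := by
  simp [massEntropy]

end MassEntropy

section LossFunctional

variable (F : ∀ {X Y : Type} [Fintype X] [Fintype Y], (X → ℝ) → (Y → ℝ) → (X → Y) → ℝ)

def lossToPoint {X : Type} [Fintype X] (p : X → ℝ) : ℝ :=
  F p (fun _ : PUnit => ∑ i, p i) fun _ => PUnit.unit

def mergeLoss (a b : ℝ) : ℝ :=
  lossToPoint F (dsum (fun _ : PUnit => a) fun _ : PUnit => b)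

structure IsInfoLoss : Prop where
  nonneg : ∀ {X Y : Type} [Fintype X] [Fintype Y] (p : X → ℝ) (q : Y → ℝ) (f : X → Y),
    IsMeas p → IsMeas q → IsMP p q f → 0 ≤ F p q f
  map_comp : ∀ {X Y Z : Type} [Fintype X] [Fintype Y] [Fintype Z]
    (p : X → ℝ) (q : Y → ℝ) (r : Z → ℝ) (g : X → Y) (f : Y → Z),
    IsMeas p → IsMeas q → IsMeas r → IsMP p q g → IsMP q r f →
    F p r (f ∘ g) = F q r f + F p q g
  map_dsum : ∀ {X X' Y Y' : Type} [Fintype X] [Fintype X'] [Fintype Y] [Fintype Y']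
    (p : X → ℝ) (p' : X' → ℝ) (q : Y → ℝ) (q' : Y' → ℝ) (f : X → X') (g : Y → Y'),
    IsMeas p → IsMeas p' → IsMeas q → IsMeas q' → IsMP p p' f → IsMP q q' g →
    F (dsum p q) (dsum p' q') (Sum.map f g) = F p p' f + F q q' g
  map_smul : ∀ {X Y : Type} [Fintype X] [Fintype Y] (p : X → ℝ) (q : Y → ℝ) (f : X → Y)
    (lam : ℝ), 0 ≤ lam → IsMeas p → IsMeas q → IsMP p q f →
    F (fun i => lam * p i) (fun j => lam * q j) f = lam * F p q f
  tendsto : ∀ {X Y : Type} [Fintype X] [Fintype Y]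
    (pn : ℕ → X → ℝ) (qn : ℕ → Y → ℝ) (fn : ℕ → X → Y)
    (p : X → ℝ) (q : Y → ℝ) (f : X → Y),
    (∀ n, IsMeas (pn n)) → (∀ n, IsMeas (qn n)) → (∀ n, IsMP (pn n) (qn n) (fn n)) →
    IsMeas p → IsMeas q → IsMP p q f →
    (∀ᶠ n in atTop, fn n = f) →
    (∀ i, Tendsto (fun n => pn n i) atTop (𝓝 (p i))) →
    (∀ j, Tendsto (fun n => qn n j) atTop (𝓝 (q j))) →
    Tendsto (fun n => F (pn n) (qn n) (fn n)) atTop (𝓝 (F p q f))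

end LossFunctional

namespace IsInfoLoss

variable {F : ∀ {X Y : Type} [Fintype X] [Fintype Y], (X → ℝ) → (Y → ℝ) → (X → Y) → ℝ}
  (hF : IsInfoLoss F) {X Y : Type} [Fintype X] [Fintype Y]
include hF

lemma apply_id {p : X → ℝ} (hp : IsMeas p) : F p p id = 0 := by
  have := hF.map_comp p p p id id hp hp hp (isMP_id p) (isMP_id p)
  simp only [Function.comp_id] at this
  linarith

lemma eq_lossToPoint_sub {p : X → ℝ} {q : Y → ℝ} {f : X → Y} (hp : IsMeas p) (hf : IsMP p q f) :
    F p q f = lossToPoint F p - lossToPoint F q := by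
  have hq := hf.isMeas hp
  have := hF.map_comp p q _ f (fun _ => PUnit.unit) hp hq ((isMP_toPUnit q).isMeas hq) hf
    (isMP_toPUnit q)
  unfold lossToPoint
  rw [← hf.sum_eq]
  exact eq_sub_of_add_eq' this.symm

lemma lossToPoint_nonneg {p : X → ℝ} (hp : IsMeas p) : 0 ≤ lossToPoint F p :=
  hF.nonneg _ _ _ hp ((isMP_toPUnit p).isMeas hp) (isMP_toPUnit p)

lemma lossToPoint_const {a : ℝ} (ha : 0 ≤ a) : lossToPoint F (fun _ : PUnit => a) = 0 := by
  have : (fun _ : PUnit => ∑ _i : PUnit, a) = fun _ => a := by simp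
  unfold lossToPoint
  rw [this]
  exact hF.apply_id fun _ => ha

lemma lossToPoint_le_comp_equiv {p : Y → ℝ} (hp : IsMeas p) (e : X ≃ Y) :
    lossToPoint F p ≤ lossToPoint F (p ∘ e) := by
  have hpe : IsMeas (p ∘ e) := fun i => hp (e i)
  have := hF.nonneg _ _ _ hpe hp (isMP_comp_equiv p e)
  rw [hF.eq_lossToPoint_sub hpe (isMP_comp_equiv p e)] at this
  linarith

lemma lossToPoint_comp_equiv {p : Y → ℝ} (hp : IsMeas p) (e : X ≃ Y) :
    lossToPoint F (p ∘ e) = lossToPoint F p := by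
  refine le_antisymm ?_ (hF.lossToPoint_le_comp_equiv hp e)
  simpa [Function.comp_assoc] using
    hF.lossToPoint_le_comp_equiv (p := p ∘ e) (fun i => hp (e i)) e.symm

lemma lossToPoint_smul {p : X → ℝ} (hp : IsMeas p) {t : ℝ} (ht : 0 ≤ t) :
    lossToPoint F (fun i => t * p i) = t * lossToPoint F p := by
  have := hF.map_smul _ _ _ t ht hp ((isMP_toPUnit p).isMeas hp) (isMP_toPUnit p)
  simpa only [lossToPoint, mul_sum] using this

lemma lossToPoint_of_isEmpty [IsEmpty X] (p : X → ℝ) : lossToPoint F p = 0 := by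
  have h := hF.lossToPoint_smul (p := p) isEmptyElim le_rfl
  rwa [show (fun i => 0 * p i) = p from funext isEmptyElim, zero_mul] at h

lemma lossToPoint_dsum {p : X → ℝ} {q : Y → ℝ} (hp : IsMeas p) (hq : IsMeas q) :
    lossToPoint F (dsum p q) =
      mergeLoss F (∑ i, p i) (∑ j, q j) + lossToPoint F p + lossToPoint F q := by
  have h1 := hF.eq_lossToPoint_sub (hp.dsum hq) ((isMP_toPUnit p).sumMap (isMP_toPUnit q))
  have h2 := hF.map_dsum _ _ _ _ _ _ hp ((isMP_toPUnit p).isMeas hp) hq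
    ((isMP_toPUnit q).isMeas hq) (isMP_toPUnit p) (isMP_toPUnit q)
  change _ = lossToPoint F p + lossToPoint F q at h2
  rw [h1] at h2
  unfold mergeLoss
  linarith

theorem isInfoCocycle_mergeLoss : IsInfoCocycle (mergeLoss F) where
  symm a b ha hb := by
    unfold mergeLoss
    rw [← hF.lossToPoint_comp_equiv (isMeas_pair hb ha) (Equiv.sumComm PUnit PUnit)]
    congr 1
    funext x
    rcases x with _ | _ <;> rfl
  smul t a b ht ha hb := by
    unfold mergeLoss
    rw [← hF.lossToPoint_smul (isMeas_pair ha hb) ht]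
    congr 1
    funext x
    rcases x with _ | _ <;> rfl
  cocycle a b c ha hb hc := by
    set A : PUnit → ℝ := fun _ => a
    set B : PUnit → ℝ := fun _ => b
    set C : PUnit → ℝ := fun _ => c
    have h := hF.lossToPoint_comp_equiv (IsMeas.dsum (fun _ => ha) (isMeas_pair hb hc))
      (Equiv.sumAssoc PUnit PUnit PUnit)
    have hassoc : dsum A (dsum B C) ∘ Equiv.sumAssoc _ _ _ = dsum (dsum A B) C := by
      funext x
      rcases x with (_ | _) | _ <;> rfl
    rw [hassoc, hF.lossToPoint_dsum (p := dsum A B) (isMeas_pair ha hb) fun _ => hc,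
      hF.lossToPoint_dsum (q := dsum B C) (fun _ => ha) (isMeas_pair hb hc),
      hF.lossToPoint_const hc, hF.lossToPoint_const ha] at h
    simp only [dsum, Fintype.sum_sum_type, Sum.elim_inl, Sum.elim_inr, Finset.univ_unique,
      sum_singleton, A, B, C, add_zero] at h
    exact h
  tendsto a b a₀ b₀ ha hb hal hbl := by
    have hpair := fun n => isMeas_pair (ha n) (hb n)
    have hpair₀ := isMeas_pair (ge_of_tendsto' hal ha) (ge_of_tendsto' hbl hb)
    refine hF.tendsto _ _ (fun _ _ => PUnit.unit) _ _ _ hpair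
      (fun n => (isMP_toPUnit _).isMeas (hpair n)) (fun n => isMP_toPUnit _) hpair₀
      ((isMP_toPUnit _).isMeas hpair₀) (isMP_toPUnit _) (Eventually.of_forall fun _ => rfl)
      (by rintro (_ | _); exacts [hal, hbl])
      fun _ => tendsto_finsetSum _ fun k _ => ?_
    rcases k with _ | _
    exacts [hal, hbl]

lemma lossToPoint_fin_eq_mul_massEntropy {n : ℕ} {p : Fin n → ℝ} (hp : IsMeas p) :
    lossToPoint F p = mergeLoss F 1 1 / (2 * log 2) * massEntropy p := by
  induction n with
  | zero => simp [hF.lossToPoint_of_isEmpty, massEntropy_of_isEmpty]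
  | succ n ih =>
    let e : Fin n ⊕ PUnit ≃ Fin (n + 1) :=
      ((finSuccEquiv n).trans (Equiv.optionEquivSumPUnit _)).symm
    have hpe : p ∘ e = dsum (fun i => p i.succ) fun _ => p 0 := by
      funext x
      rcases x with _ | _ <;> rfl
    have htail : IsMeas fun i : Fin n => p i.succ := fun i => hp _
    rw [← hF.lossToPoint_comp_equiv hp e, ← massEntropy_comp_equiv p e, hpe,
      hF.lossToPoint_dsum htail fun _ => hp 0, massEntropy_dsum, ih htail,
      hF.lossToPoint_const (hp 0), massEntropy_const,
      hF.isInfoCocycle_mergeLoss.eq_mul_pairEntropy (sum_nonneg fun i _ => htail i)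
        (sum_nonneg fun _ _ => hp 0)]
    ring

theorem lossToPoint_eq_mul_massEntropy {p : X → ℝ} (hp : IsMeas p) :
    lossToPoint F p = mergeLoss F 1 1 / (2 * log 2) * massEntropy p := by
  let e := Fintype.equivFin X
  have := hF.lossToPoint_fin_eq_mul_massEntropy (p := p ∘ e.symm) fun _ => hp _
  rwa [← hF.lossToPoint_comp_equiv (p := p ∘ e.symm) (fun _ => hp _) e,
    ← massEntropy_comp_equiv _ e,
    Function.comp_assoc, e.symm_comp_self, Function.comp_id] at this

end IsInfoLoss

/-- Characterization of information loss on finite measure spaces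
(Baez–Fritz–Leinster, Corollary 3). -/
theorem stmt2
    (F : ∀ {X Y : Type} [Fintype X] [Fintype Y], (X → ℝ) → (Y → ℝ) → (X → Y) → ℝ)
    (hnn : ∀ {X Y : Type} [Fintype X] [Fintype Y] (p : X → ℝ) (q : Y → ℝ) (f : X → Y),
      IsMeas p → IsMeas q → IsMP p q f → 0 ≤ F p q f)
    (hfunc : ∀ {X Y Z : Type} [Fintype X] [Fintype Y] [Fintype Z]
      (p : X → ℝ) (q : Y → ℝ) (r : Z → ℝ) (g : X → Y) (f : Y → Z),
      IsMeas p → IsMeas q → IsMeas r → IsMP p q g → IsMP q r f →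
      F p r (f ∘ g) = F q r f + F p q g)
    (hadd : ∀ {X X' Y Y' : Type} [Fintype X] [Fintype X'] [Fintype Y] [Fintype Y']
      (p : X → ℝ) (p' : X' → ℝ) (q : Y → ℝ) (q' : Y' → ℝ) (f : X → X') (g : Y → Y'),
      IsMeas p → IsMeas p' → IsMeas q → IsMeas q' → IsMP p p' f → IsMP q q' g →
      F (dsum p q) (dsum p' q') (Sum.map f g) = F p p' f + F q q' g)
    (hhom : ∀ {X Y : Type} [Fintype X] [Fintype Y] (p : X → ℝ) (q : Y → ℝ) (f : X → Y)
      (lam : ℝ), 0 ≤ lam → IsMeas p → IsMeas q → IsMP p q f →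
      F (fun i => lam * p i) (fun j => lam * q j) f = lam * F p q f)
    (hcont : ∀ {X Y : Type} [Fintype X] [Fintype Y]
      (pn : ℕ → X → ℝ) (qn : ℕ → Y → ℝ) (fn : ℕ → X → Y)
      (p : X → ℝ) (q : Y → ℝ) (f : X → Y),
      (∀ n, IsMeas (pn n)) → (∀ n, IsMeas (qn n)) → (∀ n, IsMP (pn n) (qn n) (fn n)) →
      IsMeas p → IsMeas q → IsMP p q f →
      (∀ᶠ n in atTop, fn n = f) →
      (∀ i, Tendsto (fun n => pn n i) atTop (𝓝 (p i))) →
      (∀ j, Tendsto (fun n => qn n j) atTop (𝓝 (q j))) →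
      Tendsto (fun n => F (pn n) (qn n) (fn n)) atTop (𝓝 (F p q f))) :
    ∃ c : ℝ, 0 ≤ c ∧ ∀ {X Y : Type} [Fintype X] [Fintype Y]
      (p : X → ℝ) (q : Y → ℝ) (f : X → Y),
      IsMeas p → IsMeas q → IsMP p q f →
      F p q f = c * (shannonExt p - shannonExt q) := by
  have hF : IsInfoLoss F := ⟨hnn, hfunc, hadd, hhom, hcont⟩
  refine ⟨mergeLoss F 1 1 / (2 * log 2),
    div_nonneg (hF.lossToPoint_nonneg (isMeas_pair zero_le_one zero_le_one)) (by positivity),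
    fun p q f hp hq hf => ?_⟩
  rw [hF.eq_lossToPoint_sub hp hf, hF.lossToPoint_eq_mul_massEntropy hp,
    hF.lossToPoint_eq_mul_massEntropy hq, shannonExt_eq_massEntropy hp,
    shannonExt_eq_massEntropy hq, mul_sub]
end

section
/- (Faddeev) Let I be a map sending every probability measure on every finite set to a nonnegative real number. Suppose: (1) I is invariant under bijections, i.e., if f : X → X′ is a bijection and p is a probability measure on X, then I of p equals I of the pushforward measure on X′; (2) I is continuous on the simplex of probability measures on {1,…,n} for each n; (3) for any probability measure p = (p_1,…,p_n) on {1,…,n} and any t ∈ [0,1], I((tp_1, (1−t)p_1, p_2, …, p_n)) = I((p_1,…,p_n)) + p_1 · I((t, 1−t)). Then there exists a constant c ≥ 0 such that I(p) = c · H(p) for all p, where H(p) = −Σ p_i ln p_i is Shannon entropy. -/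
open scoped BigOperators Classical
open Filter Topology Real

/-!
Put `f n := I (uniform distribution on n points)` and `g t := I (t, 1 - t)`. Applying the
recursion repeatedly merges `a` atoms of mass `x` into one atom of mass `a x` at cost `a x f a`;
merging the uniform distribution on `a + b` points into two blocks gives
`g (a / (a + b)) = f (a + b) - a / (a + b) f a - b / (a + b) f b`, whence `f (a b) = f a + f b`.
With `c := f 2 / log 2`, the function `φ n := f n - c log n` is completely additive with
`φ 2 = 0`, and the block formula for `2m + 1 = m + (m + 1)` together with continuity of `g` at
`1/2` makes `φ (2m + 1)` a convex combination of `φ m` and `φ (m + 1)` up to an error tending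
to `0` (`midDefect`). Hence `|φ n| ≤ C_ε + ε log₂ n` for every `ε > 0`, which together with
`φ (n ^ j) = j φ n` forces `φ = 0`. So `g` is `c` times the binary entropy at rational points,
hence everywhere by continuity, and the recursion yields `I = c H` by induction on the number of
atoms.
-/

noncomputable def midDefect (φ : ℕ → ℝ) (m : ℕ) : ℝ :=
  φ (2 * m + 1) - m / (2 * m + 1) * φ m - (m + 1) / (2 * m + 1) * φ (m + 1)

section AdditiveFunction

variable {φ : ℕ → ℝ}

theorem abs_le_add_mul_of_tendsto_midDefect (hdouble : ∀ m, 0 < m → φ (2 * m) = φ m)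
    (hdefect : Tendsto (midDefect φ) atTop (𝓝 0)) {ε : ℝ} (hε : 0 < ε) :
    ∃ C, ∀ k n : ℕ, 0 < n → n ≤ 2 ^ k → |φ n| ≤ C + ε * k := by
  obtain ⟨N, hN⟩ := Metric.tendsto_atTop.mp hdefect ε hε
  set C := ∑ n ∈ Finset.range (2 * N + 2), |φ n|
  have hsmall : ∀ n ≤ 2 * N + 1, |φ n| ≤ C := fun n hn =>
    Finset.single_le_sum (f := fun n => |φ n|) (fun _ _ => abs_nonneg _)
      (Finset.mem_range.mpr (by omega))
  refine ⟨C, fun k => ?_⟩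
  induction k with
  | zero =>
    intro n _ hn
    simpa using hsmall n (by simp at hn; omega)
  | succ k ih =>
    intro n hn hnk
    rw [pow_succ] at hnk
    have hmono : C + ε * k ≤ C + ε * ↑(k + 1) := by push_cast; linarith
    by_cases hsm : n ≤ 2 * N + 1
    · exact (hsmall n hsm).trans (le_trans (by nlinarith [k.cast_nonneg (α := ℝ)]) hmono)
    obtain ⟨m, rfl | rfl⟩ := Nat.even_or_odd' n
    · rw [hdouble m (by omega)]
      exact (ih m (by omega) (by omega)).trans hmono
    · have hA : |midDefect φ m| < ε := by simpa [Real.dist_eq] using hN m (by omega)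
      have hm := ih m (by omega) (by omega)
      have hm₁ := ih (m + 1) (by omega) (by omega)
      set w₁ : ℝ := m / (2 * m + 1) with hw₁_def
      set w₂ : ℝ := (m + 1) / (2 * m + 1) with hw₂_def
      have hw : w₁ + w₂ = 1 := by rw [hw₁_def, hw₂_def]; field_simp; ring
      have hw₁ : 0 ≤ w₁ := by positivity
      have hw₂ : 0 ≤ w₂ := by positivity
      calc |φ (2 * m + 1)|
          = |w₁ * φ m + w₂ * φ (m + 1) + midDefect φ m| := by
            rw [midDefect, hw₁_def, hw₂_def]; congr 1; ring
        _ ≤ w₁ * |φ m| + w₂ * |φ (m + 1)| + ε := by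
            refine (abs_add_le _ _).trans (add_le_add ((abs_add_le _ _).trans ?_) hA.le)
            rw [abs_mul, abs_mul, abs_of_nonneg hw₁, abs_of_nonneg hw₂]
        _ ≤ w₁ * (C + ε * k) + w₂ * (C + ε * k) + ε := by gcongr
        _ = C + ε * ↑(k + 1) := by push_cast; linear_combination (C + ε * k) * hw

theorem eq_zero_of_abs_le_add_mul (hmul : ∀ a b, 0 < a → 0 < b → φ (a * b) = φ a + φ b)
    (hgrowth : ∀ ε > 0, ∃ C, ∀ k n : ℕ, 0 < n → n ≤ 2 ^ k → |φ n| ≤ C + ε * k)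
    {n : ℕ} (hn : 0 < n) : φ n = 0 := by
  have hpow : ∀ j : ℕ, φ (n ^ j) = j * φ n := by
    intro j
    induction j with
    | zero => simpa using hmul 1 1 one_pos one_pos
    | succ j ih => rw [pow_succ, hmul _ _ (by positivity) hn, ih]; push_cast; ring
  have hnR : (0 : ℝ) < n := by exact_mod_cast hn
  suffices h : ∀ ε > 0, |φ n| ≤ ε * n by
    refine abs_nonpos_iff.mp (le_of_forall_pos_le_add fun ε hε => ?_)
    simpa [div_mul_cancel₀ _ hnR.ne'] using h (ε / n) (by positivity)
  intro ε hε
  obtain ⟨C, hC⟩ := hgrowth ε hε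
  have hbound : ∀ j : ℕ, 0 < j → |φ n| ≤ C / j + ε * n := by
    intro j hj
    have hle : n ^ j ≤ 2 ^ (n * j) := by
      rw [pow_mul]; exact Nat.pow_le_pow_left Nat.lt_two_pow_self.le j
    have h := hC (n * j) (n ^ j) (by positivity) hle
    rw [hpow, abs_mul, Nat.abs_cast] at h
    have hjR : (0 : ℝ) < j := by exact_mod_cast hj
    rw [div_add' _ _ _ hjR.ne', le_div_iff₀ hjR]
    push_cast at h
    linarith
  have hlim : Tendsto (fun j : ℕ => C / j + ε * n) atTop (𝓝 (ε * n)) := by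
    simpa using (tendsto_const_div_atTop_nhds_zero_nat C).add_const (ε * n)
  exact ge_of_tendsto hlim ((eventually_gt_atTop 0).mono hbound)

end AdditiveFunction

theorem binEntropy_div_add {a b : ℝ} (ha : 0 < a) (hb : 0 < b) :
    binEntropy (a / (a + b)) = log (a + b) - a / (a + b) * log a - b / (a + b) * log b := by
  have hab : 0 < a + b := by positivity
  have h1 : 1 - a / (a + b) = b / (a + b) := by field_simp; ring
  rw [binEntropy, h1, inv_div, inv_div, log_div hab.ne' ha.ne', log_div hab.ne' hb.ne']
  field_simp
  ring

theorem eqOn_Icc_of_eq_natCast_div {F G : ℝ → ℝ} (hF : ContinuousOn F (Set.Icc 0 1))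
    (hG : ContinuousOn G (Set.Icc 0 1))
    (h : ∀ a b : ℕ, 0 < a → 0 < b → F (a / (a + b)) = G (a / (a + b))) :
    Set.EqOn F G (Set.Icc 0 1) := by
  set S := Set.Ioo (0 : ℝ) 1 ∩ Set.range ((↑) : ℚ → ℝ)
  have hS : Set.EqOn F G S := by
    rintro _ ⟨⟨h0, h1⟩, q, rfl⟩
    have hq0 : 0 < q.num := Rat.num_pos.mpr (by exact_mod_cast h0)
    have hq1 : q.num < q.den := Rat.num_lt_denom_iff.mpr (by exact_mod_cast h1)
    obtain ⟨a, ha⟩ := Int.eq_ofNat_of_zero_le hq0.le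
    have hcast : (q : ℝ) = a / (a + ↑(q.den - a)) := by
      rw [Rat.cast_def, ha, Nat.cast_sub (by omega), add_sub_cancel]; rfl
    rw [hcast]
    exact h a (q.den - a) (by omega) (by omega)
  refine hS.of_subset_closure hF hG (Set.inter_subset_left.trans Set.Ioo_subset_Icc_self) ?_
  rw [← closure_Ioo zero_ne_one]
  exact closure_minimal (Rat.denseRange_cast.open_subset_closure_inter isOpen_Ioo)
    isClosed_closure

theorem Fin.append_const_const {α : Type*} {m n : ℕ} (x : α) :
    Fin.append (fun _ : Fin m => x) (fun _ : Fin n => x) = fun _ => x := by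
  ext i
  exact Fin.addCases (fun _ => Fin.append_left ..) (fun _ => Fin.append_right ..) i

theorem Fin.append_const_succ {α : Type*} {m n : ℕ} (x : α) (w : Fin n → α) :
    Fin.append (fun _ : Fin (m + 1) => x) w
      = Fin.append (fun _ : Fin m => x) (Fin.cons x w) ∘ Fin.cast (Nat.succ_add_eq_add_succ ..) := by
  rw [← Fin.append_left_snoc]
  congr 1
  ext i
  refine Fin.lastCases ?_ (fun j => ?_) i <;> simp

theorem isProb_comp_equiv {X Y : Type} [Fintype X] [Fintype Y] (e : Y ≃ X) {p : X → ℝ}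
    (hp : IsProb p) : IsProb (p ∘ e) :=
  ⟨fun i => hp.1 (e i), by rw [← hp.2]; exact e.sum_comp p⟩

theorem isProb_cons_iff {n : ℕ} {x : ℝ} {w : Fin n → ℝ} :
    IsProb (Fin.cons x w : Fin (n + 1) → ℝ) ↔ 0 ≤ x ∧ (∀ i, 0 ≤ w i) ∧ x + ∑ i, w i = 1 := by
  simp [IsProb, Fin.forall_fin_succ, Fin.sum_cons, and_assoc]

theorem isProb_append_iff {m n : ℕ} {u : Fin m → ℝ} {w : Fin n → ℝ} :
    IsProb (Fin.append u w) ↔ (∀ i, 0 ≤ u i) ∧ (∀ i, 0 ≤ w i) ∧ ∑ i, u i + ∑ i, w i = 1 := by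
  simp [IsProb, Fin.forall_fin_add, Fin.sum_univ_add, and_assoc]

theorem isProb_pair {t : ℝ} (ht : t ∈ Set.Icc 0 1) : IsProb ![t, 1 - t] :=
  isProb_cons_iff.mpr ⟨ht.1, fun i => by fin_cases i; simp [ht.2], by simp⟩

theorem shannon_comp_equiv {X Y : Type} [Fintype X] [Fintype Y] (e : Y ≃ X) (p : X → ℝ) :
    shannon (p ∘ e) = shannon p := by
  simp only [shannon, Function.comp_apply, e.sum_comp (fun i => p i * log (p i))]

theorem shannon_cons {n : ℕ} (x : ℝ) (w : Fin n → ℝ) :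
    shannon (Fin.cons x w : Fin (n + 1) → ℝ) = negMulLog x + shannon w := by
  simp only [shannon, Fin.sum_univ_succ, Fin.cons_zero, Fin.cons_succ, negMulLog]
  ring

theorem shannon_cons_split {n : ℕ} (s t : ℝ) (w : Fin n → ℝ) :
    shannon (Fin.cons (t * s) (Fin.cons ((1 - t) * s) w) : Fin (n + 2) → ℝ)
      = shannon (Fin.cons s w : Fin (n + 1) → ℝ) + s * binEntropy t := by
  simp only [shannon_cons, negMulLog_mul, binEntropy_eq_negMulLog_add_negMulLog_one_sub]
  ring

section Faddeev

variable {I : ∀ {X : Type} [Fintype X], (X → ℝ) → ℝ}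

variable (I) in
noncomputable def uniformValue (n : ℕ) : ℝ := I (fun _ : Fin n => (n : ℝ)⁻¹)

variable
    (hbij : ∀ {X X' : Type} [Fintype X] [Fintype X'] (e : X ≃ X') (p : X → ℝ),
      IsProb p → I (fun j => p (e.symm j)) = I p)
    (hcont : ∀ n : ℕ, ContinuousOn (fun p : Fin n → ℝ => I p) {p | IsProb p})
    (hrec : ∀ (n : ℕ) (p : Fin (n + 1) → ℝ), IsProb p → ∀ t : ℝ, 0 ≤ t → t ≤ 1 →
      I (Fin.cons (t * p 0) (Fin.cons ((1 - t) * p 0) (Fin.tail p)))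
        = I p + p 0 * I ![t, 1 - t])

include hbij in
theorem apply_comp_equiv {X Y : Type} [Fintype X] [Fintype Y] (e : Y ≃ X) {p : X → ℝ}
    (hp : IsProb p) : I (p ∘ e) = I p :=
  hbij e.symm p hp

include hbij in
theorem apply_comp_cast {m n : ℕ} (h : m = n) {p : Fin n → ℝ} (hp : IsProb p) :
    I (p ∘ Fin.cast h) = I p :=
  apply_comp_equiv hbij (finCongr h) hp

include hbij in
theorem apply_append_comm {m n : ℕ} (u : Fin m → ℝ) (v : Fin n → ℝ)
    (hp : IsProb (Fin.append v u)) : I (Fin.append u v) = I (Fin.append v u) := by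
  rw [← apply_comp_equiv hbij finAddFlip hp]
  congr 1
  ext i
  refine Fin.addCases (fun k => ?_) (fun k => ?_) i <;> simp

include hbij in
theorem apply_pair_swap {x y : ℝ} (hp : IsProb ![y, x]) : I ![x, y] = I ![y, x] := by
  rw [← apply_comp_equiv hbij (Equiv.swap 0 1) hp]
  congr 1
  ext i
  fin_cases i <;> rfl

include hrec in
theorem apply_cons_split {n : ℕ} {s t : ℝ} {w : Fin n → ℝ}
    (hp : IsProb (Fin.cons s w : Fin (n + 1) → ℝ)) (ht₀ : 0 ≤ t) (ht₁ : t ≤ 1) :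
    I (Fin.cons (t * s) (Fin.cons ((1 - t) * s) w) : Fin (n + 2) → ℝ)
      = I (Fin.cons s w : Fin (n + 1) → ℝ) + s * I ![t, 1 - t] := by
  simpa using hrec n _ hp t ht₀ ht₁

include hrec in
theorem uniformValue_one : uniformValue I 1 = 0 := by
  have h := apply_cons_split hrec (s := 1) (w := ![]) (isProb_cons_iff.mpr (by simp))
    (t := 2⁻¹) (by norm_num) (by norm_num)
  have h1 : (Fin.cons 1 ![] : Fin 1 → ℝ) = fun _ => ((1 : ℕ) : ℝ)⁻¹ := by
    ext i; fin_cases i; simp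
  rw [h1] at h
  simpa [uniformValue] using h

include hbij hrec in
theorem apply_append_const {a : ℕ} (ha : 0 < a) :
    ∀ {n : ℕ} {x : ℝ} {w : Fin n → ℝ}, 0 ≤ x → (∀ i, 0 ≤ w i) → a * x + ∑ i, w i = 1 →
      I (Fin.append (fun _ : Fin a => x) w)
        = I (Fin.cons (a * x) w : Fin (n + 1) → ℝ) + a * x * uniformValue I a := by
  induction a, ha using Nat.le_induction with
  | base =>
    intro n x w hx hw hsum
    rw [Fin.append_left_eq_cons,
      apply_comp_cast hbij _ (isProb_cons_iff.mpr ⟨hx, hw, by simpa using hsum⟩),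
      uniformValue_one hrec]
    simp
  | succ a ha ih =>
    intro n x w hx hw hsum
    have hpair : I ![(a : ℝ) / (a + 1), 1 - a / (a + 1)]
        = uniformValue I (a + 1) - a / (a + 1) * uniformValue I a := by
      have h := ih (n := 1) (x := (a + 1 : ℝ)⁻¹) (w := fun _ => (a + 1 : ℝ)⁻¹) (by positivity)
        (fun _ => by positivity) (by simp; field_simp)
      have hcons : (Fin.cons (a * (a + 1 : ℝ)⁻¹) (fun _ : Fin 1 => (a + 1 : ℝ)⁻¹) : Fin 2 → ℝ)
          = ![(a : ℝ) / (a + 1), 1 - a / (a + 1)] := by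
        rw [div_eq_mul_inv, show (1 : ℝ) - a * (a + 1 : ℝ)⁻¹ = (a + 1 : ℝ)⁻¹ by field_simp; ring]
        ext i; fin_cases i <;> rfl
      rw [Fin.append_const_const, hcons, ← div_eq_mul_inv] at h
      rw [uniformValue, Nat.cast_add_one, h]
      ring
    have hsplit := apply_cons_split hrec (s := (a + 1) * x) (w := w) (t := (a : ℝ) / (a + 1))
      (isProb_cons_iff.mpr ⟨by positivity, hw, by push_cast at hsum; linarith⟩) (by positivity)
      (by rw [div_le_one (by positivity)]; linarith)
    rw [show (a : ℝ) / (a + 1) * ((a + 1) * x) = a * x by field_simp,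
      show (1 - (a : ℝ) / (a + 1)) * ((a + 1) * x) = x by field_simp; ring, hpair] at hsplit
    have hw' : ∀ i, 0 ≤ (Fin.cons x w : Fin (n + 1) → ℝ) i := Fin.cases hx hw
    have hsum' : a * x + ∑ i, (Fin.cons x w : Fin (n + 1) → ℝ) i = 1 := by
      rw [Fin.sum_cons]; push_cast at hsum; linarith
    have hp : IsProb (Fin.append (fun _ : Fin a => x) (Fin.cons x w)) :=
      isProb_append_iff.mpr ⟨fun _ => hx, hw', by simpa using hsum'⟩
    rw [Fin.append_const_succ, apply_comp_cast hbij _ hp, ih hx hw' hsum', hsplit]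
    push_cast
    field_simp
    ring

include hbij hrec in
theorem apply_pair_natCast_div {a b : ℕ} (ha : 0 < a) (hb : 0 < b) :
    I ![(a : ℝ) / (a + b), 1 - a / (a + b)] = uniformValue I (a + b)
      - a / (a + b) * uniformValue I a - b / (a + b) * uniformValue I b := by
  have hN : (0 : ℝ) < a + b := by positivity
  set x : ℝ := ((a : ℝ) + b)⁻¹
  have hx : 0 ≤ x := by positivity
  have hax : (a : ℝ) * x = a / (a + b) := (div_eq_mul_inv _ _).symm
  have hbx : (b : ℝ) * x = b / (a + b) := (div_eq_mul_inv _ _).symm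
  have hsum : (a : ℝ) * x + b * x = 1 := by rw [hax, hbx, ← add_div, div_self hN.ne']
  have hp : IsProb (Fin.cons (a * x) (fun _ : Fin b => x) : Fin (b + 1) → ℝ) :=
    isProb_cons_iff.mpr ⟨by positivity, fun _ => hx, by simpa using hsum⟩
  have hsplitA := apply_append_const hbij hrec ha (w := fun _ : Fin b => x) hx (fun _ => hx)
    (by simpa using hsum)
  have hunif : Fin.append (fun _ : Fin a => x) (fun _ : Fin b => x)
      = fun _ : Fin (a + b) => ((a + b : ℕ) : ℝ)⁻¹ := by
    ext i
    refine Fin.addCases (fun j => ?_) (fun j => ?_) i <;> simp [x]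
  rw [hunif] at hsplitA
  change uniformValue I (a + b) = _ at hsplitA
  have hsplitB := apply_append_const hbij hrec hb (w := ![a * x]) hx
    (fun i => by fin_cases i; simpa using mul_nonneg a.cast_nonneg hx) (by simp; linarith)
  have hrotate : I (Fin.append (fun _ : Fin b => x) ![a * x])
      = I (Fin.cons (a * x) (fun _ : Fin b => x) : Fin (b + 1) → ℝ) := by
    rw [apply_append_comm hbij, Fin.append_left_eq_cons]
    · exact apply_comp_cast hbij (Nat.add_comm 1 b) hp
    · rw [Fin.append_left_eq_cons]
      exact isProb_comp_equiv (finCongr (Nat.add_comm 1 b)) hp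
  have hswap : I ![(b : ℝ) * x, a * x] = I ![(a : ℝ) * x, 1 - a * x] := by
    rw [apply_pair_swap hbij (isProb_cons_iff.mpr ⟨by positivity,
      fun i => by fin_cases i; simp; positivity, by simpa using hsum⟩), ← hsum, add_sub_cancel_left]
  rw [hrotate] at hsplitB
  change _ = I ![(b : ℝ) * x, a * x] + _ at hsplitB
  rw [hswap] at hsplitB
  rw [← hax, ← hbx]
  linear_combination -hsplitA - hsplitB

include hbij hrec in
theorem uniformValue_mul {a b : ℕ} (ha : 0 < a) (hb : 0 < b) :
    uniformValue I (a * b) = uniformValue I a + uniformValue I b := by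
  induction a, ha using Nat.le_induction with
  | base => simp [uniformValue_one hrec]
  | succ a ha ih =>
    have hblock := apply_pair_natCast_div hbij hrec hb (Nat.mul_pos ha hb)
    have hsingle := apply_pair_natCast_div hbij hrec one_pos ha
    have e₁ : (b : ℝ) / (b + a * b) = 1 / (1 + a) := by field_simp
    have e₂ : (a * b : ℝ) / (b + a * b) = a / (1 + a) := by field_simp
    simp only [Nat.cast_one, Nat.cast_mul, e₁, e₂, uniformValue_one hrec, ih] at hblock hsingle
    rw [show (a + 1) * b = b + a * b by ring, show a + 1 = 1 + a by ring]
    rw [hsingle] at hblock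
    have hsum : 1 / (1 + a : ℝ) + a / (1 + a) = 1 := by field_simp
    linear_combination -hblock + uniformValue I b * hsum

include hcont in
theorem continuousOn_apply_pair : ContinuousOn (fun t : ℝ => I ![t, 1 - t]) (Set.Icc 0 1) :=
  (hcont 2).comp (by fun_prop : Continuous fun t : ℝ => ![t, 1 - t]).continuousOn
    fun _ ht => isProb_pair ht

include hbij hcont hrec in
theorem tendsto_midDefect {c : ℝ} (hc : uniformValue I 2 = c * log 2) :
    Tendsto (midDefect fun n => uniformValue I n - c * log n) atTop (𝓝 0) := by
  set x : ℕ → ℝ := fun m => m / (2 * m + 1)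
  have hx : Tendsto x atTop (𝓝 2⁻¹) := by
    convert tendsto_add_mul_div_add_mul_atTop_nhds (0 : ℝ) 1 1 two_ne_zero using 2 with m
    · simp only [x]; ring
    · norm_num
  have hxIcc : ∀ m, x m ∈ Set.Icc 0 1 := fun m =>
    ⟨by positivity, div_le_one_of_le₀ (by linarith [m.cast_nonneg (α := ℝ)]) (by positivity)⟩
  have hlim : Tendsto (fun m => I ![x m, 1 - x m] - c * binEntropy (x m)) atTop
      (𝓝 (I ![2⁻¹, 1 - 2⁻¹] - c * binEntropy 2⁻¹)) :=
    (((continuousOn_apply_pair hcont) 2⁻¹ ⟨by norm_num, by norm_num⟩).tendsto.comp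
      (tendsto_nhdsWithin_iff.mpr ⟨hx, .of_forall hxIcc⟩)).sub
      ((binEntropy_continuous.tendsto _).comp hx |>.const_mul c)
  have hhalf : I ![(2 : ℝ)⁻¹, 1 - 2⁻¹] = uniformValue I 2 := by
    unfold uniformValue; congr 1; ext i; fin_cases i <;> norm_num
  rw [hhalf, binEntropy_two_inv, hc, sub_self] at hlim
  refine hlim.congr' ((eventually_gt_atTop 0).mono fun m hm => ?_)
  have hpair := apply_pair_natCast_div hbij hrec hm (Nat.succ_pos m)
  have hbin := binEntropy_div_add (a := m) (b := m + 1) (by positivity) (by positivity)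
  rw [show m + (m + 1) = 2 * m + 1 by ring] at hpair
  push_cast at hpair
  rw [show (m : ℝ) + (m + 1) = 2 * m + 1 by ring] at hpair hbin
  simp only [midDefect, x]
  rw [hpair, hbin]
  push_cast
  ring

include hbij hcont hrec in
theorem uniformValue_eq_mul_log {c : ℝ} (hc : uniformValue I 2 = c * log 2) {n : ℕ}
    (hn : 0 < n) : uniformValue I n = c * log n := by
  set φ : ℕ → ℝ := fun n => uniformValue I n - c * log n
  have hmul : ∀ a b, 0 < a → 0 < b → φ (a * b) = φ a + φ b := fun a b ha hb => by
    simp only [φ, uniformValue_mul hbij hrec ha hb, Nat.cast_mul,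
      log_mul (Nat.cast_ne_zero.mpr ha.ne') (Nat.cast_ne_zero.mpr hb.ne')]
    ring
  have hdouble : ∀ m, 0 < m → φ (2 * m) = φ m := fun m hm => by
    rw [hmul 2 m two_pos hm, show φ 2 = 0 by simp [φ, hc], zero_add]
  refine sub_eq_zero.mp (eq_zero_of_abs_le_add_mul hmul (fun _ hε => ?_) hn)
  exact abs_le_add_mul_of_tendsto_midDefect hdouble (tendsto_midDefect hbij hcont hrec hc) hε

include hbij hcont hrec in
theorem apply_pair_eq_mul_binEntropy {c : ℝ} (hc : uniformValue I 2 = c * log 2) {t : ℝ}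
    (ht : t ∈ Set.Icc 0 1) : I ![t, 1 - t] = c * binEntropy t := by
  refine eqOn_Icc_of_eq_natCast_div (G := fun t => c * binEntropy t)
    (continuousOn_apply_pair hcont) (by fun_prop) (fun a b ha hb => ?_) ht
  rw [apply_pair_natCast_div hbij hrec ha hb, binEntropy_div_add (by positivity) (by positivity),
    uniformValue_eq_mul_log hbij hcont hrec hc (by omega),
    uniformValue_eq_mul_log hbij hcont hrec hc ha, uniformValue_eq_mul_log hbij hcont hrec hc hb]
  push_cast
  ring

include hbij hcont hrec in
theorem apply_eq_mul_shannon {c : ℝ} (hc : uniformValue I 2 = c * log 2) :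
    ∀ {n : ℕ} (p : Fin n → ℝ), IsProb p → I p = c * shannon p
  | 0, p, hp => by simpa using hp.2
  | 1, p, hp => by
    have h1 : p = fun _ => ((1 : ℕ) : ℝ)⁻¹ := by ext i; simpa [Subsingleton.elim i 0] using hp.2
    rw [h1, show shannon (fun _ : Fin 1 => ((1 : ℕ) : ℝ)⁻¹) = 0 by simp [shannon], mul_zero]
    exact uniformValue_one hrec
  | n + 2, p, hp => by
    set s := p 0 + p 1
    set t := p 0 / s
    set w := Fin.tail (Fin.tail p)
    have hp₀ := hp.1 0
    have hp₁ := hp.1 1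
    -- when `s = 0`, the junk value `t = 0 / 0 = 0` still gives `t * s = p 0`
    have hts : t * s = p 0 := by
      by_cases hs : s = 0
      · rw [hs, mul_zero]; linarith
      · exact div_mul_cancel₀ _ hs
    have hp_eq : p = Fin.cons (t * s) (Fin.cons ((1 - t) * s) w) := by
      rw [sub_mul, one_mul, hts, show s - p 0 = p 1 by ring]
      ext i
      exact Fin.cases rfl (fun j => Fin.cases rfl (fun k => rfl) j) i
    have ht : t ∈ Set.Icc 0 1 := ⟨by positivity, div_le_one_of_le₀ (by linarith) (by positivity)⟩
    have hq : IsProb (Fin.cons s w : Fin (n + 1) → ℝ) := by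
      refine isProb_cons_iff.mpr ⟨add_nonneg hp₀ hp₁, fun i => hp.1 _, ?_⟩
      rw [← hp.2, Fin.sum_univ_succ, Fin.sum_univ_succ]
      simp only [s, w, Fin.tail, add_assoc]
      rfl
    rw [hp_eq, apply_cons_split hrec hq ht.1 ht.2, apply_eq_mul_shannon hc _ hq,
      apply_pair_eq_mul_binEntropy hbij hcont hrec hc ht, shannon_cons_split]
    ring

end Faddeev

/-- Faddeev's characterization of Shannon entropy. -/
theorem stmt4
    (I : ∀ {X : Type} [Fintype X], (X → ℝ) → ℝ)
    (hnn : ∀ {X : Type} [Fintype X] (p : X → ℝ), IsProb p → 0 ≤ I p)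
    (hbij : ∀ {X X' : Type} [Fintype X] [Fintype X'] (e : X ≃ X') (p : X → ℝ),
      IsProb p → I (fun j => p (e.symm j)) = I p)
    (hcont : ∀ n : ℕ, ContinuousOn (fun p : Fin n → ℝ => I p) {p | IsProb p})
    (hrec : ∀ (n : ℕ) (p : Fin (n + 1) → ℝ), IsProb p → ∀ t : ℝ, 0 ≤ t → t ≤ 1 →
      I (Fin.cons (t * p 0) (Fin.cons ((1 - t) * p 0) (Fin.tail p)))
        = I p + p 0 * I ![t, 1 - t]) :
    ∃ c : ℝ, 0 ≤ c ∧ ∀ {X : Type} [Fintype X] (p : X → ℝ), IsProb p →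
      I p = c * shannon p := by
  have hc : uniformValue I 2 = uniformValue I 2 / log 2 * log 2 :=
    (div_mul_cancel₀ _ (log_pos one_lt_two).ne').symm
  have hf₂ : 0 ≤ uniformValue I 2 := hnn _ ⟨fun _ => by positivity, by simp⟩
  refine ⟨_, div_nonneg hf₂ (log_nonneg one_le_two), fun {X} _ p hp => ?_⟩
  let e := (Fintype.equivFin X).symm
  rw [← apply_comp_equiv hbij e hp, ← shannon_comp_equiv e,
    apply_eq_mul_shannon hbij hcont hrec hc _ (isProb_comp_equiv e hp)]
end
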